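/- If a closed core Eff computation c has dirty types C and D, i.e., both ⊢ c : C and ⊢ c : D are derivable, then C^s = D^s; analogously, if a closed expression e has pure types A and B, then A^s = B^s. -/

import Mathlib

namespace CoreEff

/-- Names for effects, instances and operation symbols. -/
structure Sig where
  Effect : Type
  Inst : Type
  Op : Type

/- Pure types and dirty types of core Eff.  A region is a finite set of
instances, a dirt a finite set of operations `ι#op`. -/
mutual
inductive PType (σ : Sig) : Type
  | bool : PType σ
  | nat : PType σ
  | unit : PType σ
  | empty : PType σ
  | fn : PType σ → DType σ → PType σ
  | eff : σ.Effect → Finset σ.Inst → PType σ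
  | hand : DType σ → DType σ → PType σ
inductive DType (σ : Sig) : Type
  | bang : PType σ → Finset (σ.Inst × σ.Op) → DType σ
end

/-- Assignment of effects to instances and operation symbols, and of
parameter/result types to operation symbols (the signatures `Σ_E`). -/
structure OpSig (σ : Sig) where
  instOf : σ.Inst → σ.Effect
  opOf : σ.Op → σ.Effect
  par : σ.Op → PType σ
  res : σ.Op → PType σ

/- Syntax of core Eff, with de Bruijn indices.
In an operation case `e#op x k ↦ c`, the body `c` binds `x` as index 1 and
`k` as index 0.  In `letrec f x = c₁ in c₂`, `c₁` binds `f` as 1 and `x` as 0,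
and `c₂` binds `f` as 0. -/
mutual
inductive Expr (σ : Sig) : Type
  | var : Nat → Expr σ
  | tt : Expr σ
  | ff : Expr σ
  | zero : Expr σ
  | succ : Expr σ → Expr σ
  | unit : Expr σ
  | fn : PType σ → Comp σ → Expr σ
  | inst : σ.Inst → Expr σ
  | handler : PType σ → Comp σ → OpCases σ → Expr σ
inductive OpCases (σ : Sig) : Type
  | nil : DType σ → OpCases σ
  | cons : Expr σ → σ.Op → Comp σ → OpCases σ → OpCases σ
inductive Comp (σ : Sig) : Type
  | ret : Expr σ → Comp σ
  | call : Expr σ → σ.Op → Expr σ → Comp σ → Comp σ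
  | handle : Expr σ → Comp σ → Comp σ
  | ite : Expr σ → Comp σ → Comp σ → Comp σ
  | case : Expr σ → Comp σ → Comp σ → Comp σ
  | absurd : DType σ → Expr σ → Comp σ
  | app : Expr σ → Expr σ → Comp σ
  | letin : Comp σ → Comp σ → Comp σ
  | letrec : PType σ → DType σ → Comp σ → Comp σ → Comp σ
end

/-- Pushing a renaming under one binder. -/
def liftRen (ξ : Nat → Nat) : Nat → Nat
  | 0 => 0
  | n + 1 => ξ n + 1

variable {σ : Sig}

mutual
def renameE (ξ : Nat → Nat) : Expr σ → Expr σ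
  | .var n => .var (ξ n)
  | .tt => .tt
  | .ff => .ff
  | .zero => .zero
  | .succ e => .succ (renameE ξ e)
  | .unit => .unit
  | .fn A c => .fn A (renameC (liftRen ξ) c)
  | .inst ι => .inst ι
  | .handler A cv ocs => .handler A (renameC (liftRen ξ) cv) (renameO ξ ocs)
def renameO (ξ : Nat → Nat) : OpCases σ → OpCases σ
  | .nil C => .nil C
  | .cons e op c ocs =>
      .cons (renameE ξ e) op (renameC (liftRen (liftRen ξ)) c) (renameO ξ ocs)
def renameC (ξ : Nat → Nat) : Comp σ → Comp σ
  | .ret e => .ret (renameE ξ e)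
  | .call e1 op e2 c => .call (renameE ξ e1) op (renameE ξ e2) (renameC (liftRen ξ) c)
  | .handle e c => .handle (renameE ξ e) (renameC ξ c)
  | .ite e c1 c2 => .ite (renameE ξ e) (renameC ξ c1) (renameC ξ c2)
  | .case e c1 c2 => .case (renameE ξ e) (renameC ξ c1) (renameC (liftRen ξ) c2)
  | .absurd C e => .absurd C (renameE ξ e)
  | .app e1 e2 => .app (renameE ξ e1) (renameE ξ e2)
  | .letin c1 c2 => .letin (renameC ξ c1) (renameC (liftRen ξ) c2)
  | .letrec A C c1 c2 =>
      .letrec A C (renameC (liftRen (liftRen ξ)) c1) (renameC (liftRen ξ) c2)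
end

/-- Weakening of an expression by one variable. -/
def shiftE (e : Expr σ) : Expr σ := renameE Nat.succ e

/-- Pushing a substitution under one binder. -/
def liftSub (s : Nat → Expr σ) : Nat → Expr σ
  | 0 => .var 0
  | n + 1 => shiftE (s n)

mutual
def substE (s : Nat → Expr σ) : Expr σ → Expr σ
  | .var n => s n
  | .tt => .tt
  | .ff => .ff
  | .zero => .zero
  | .succ e => .succ (substE s e)
  | .unit => .unit
  | .fn A c => .fn A (substC (liftSub s) c)
  | .inst ι => .inst ι
  | .handler A cv ocs => .handler A (substC (liftSub s) cv) (substO s ocs)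
def substO (s : Nat → Expr σ) : OpCases σ → OpCases σ
  | .nil C => .nil C
  | .cons e op c ocs =>
      .cons (substE s e) op (substC (liftSub (liftSub s)) c) (substO s ocs)
def substC (s : Nat → Expr σ) : Comp σ → Comp σ
  | .ret e => .ret (substE s e)
  | .call e1 op e2 c => .call (substE s e1) op (substE s e2) (substC (liftSub s) c)
  | .handle e c => .handle (substE s e) (substC s c)
  | .ite e c1 c2 => .ite (substE s e) (substC s c1) (substC s c2)
  | .case e c1 c2 => .case (substE s e) (substC s c1) (substC (liftSub s) c2)
  | .absurd C e => .absurd C (substE s e)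
  | .app e1 e2 => .app (substE s e1) (substE s e2)
  | .letin c1 c2 => .letin (substC s c1) (substC (liftSub s) c2)
  | .letrec A C c1 c2 =>
      .letrec A C (substC (liftSub (liftSub s)) c1) (substC (liftSub s) c2)
end

/-- Substituting an expression for the last-bound variable. -/
def sub1 (e : Expr σ) : Nat → Expr σ
  | 0 => e
  | n + 1 => .var n

/-- Substituting for the two last-bound variables (index 1 gets `e1`, index 0 gets `e0`). -/
def sub2 (e1 e0 : Expr σ) : Nat → Expr σ
  | 0 => e0
  | 1 => e1
  | n + 2 => .var n

def subst0E (e : Expr σ) (e' : Expr σ) : Expr σ := substE (sub1 e) e'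
def subst0C (e : Expr σ) (c : Comp σ) : Comp σ := substC (sub1 e) c
def subst2C (e1 e0 : Expr σ) (c : Comp σ) : Comp σ := substC (sub2 e1 e0) c

/-- Swap of the two last-bound variables. -/
def swap01 : Nat → Nat
  | 0 => 1
  | 1 => 0
  | n + 2 => n + 2

/-- The unfolding `fun x ↦ let rec f x = c₁ in c₁` of a recursive definition. -/
def recUnfold (A : PType σ) (C : DType σ) (c1 : Comp σ) : Expr σ :=
  .fn A (.letrec A C (renameC (liftRen (liftRen Nat.succ)) c1) (renameC swap01 c1))

/-- `Dispatch ocs ι op e κ c` means `c = ocs_{ι#op}(e, κ)`: the first operation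
case of `ocs` matching `ι#op` is selected (substituting `e` for the parameter
and `κ` for the continuation) and the call is re-raised, with continuation
`(y. κ y)`, if no case matches. -/
inductive Dispatch : OpCases σ → σ.Inst → σ.Op → Expr σ → Expr σ → Comp σ → Prop
  | nil {C ι op e κ} :
      Dispatch (.nil C) ι op e κ (.call (.inst ι) op e (.app (shiftE κ) (.var 0)))
  | found {ι op c ocs e κ} :
      Dispatch (.cons (.inst ι) op c ocs) ι op e κ (subst2C e κ c)
  | skip {e' op' c ocs ι op e κ c'} :
      (Expr.inst ι ≠ e' ∨ op ≠ op') →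
      Dispatch ocs ι op e κ c' →
      Dispatch (.cons e' op' c ocs) ι op e κ c'

/-- Small-step operational semantics `c ⇝ c'` of core Eff. -/
inductive Step (Ω : OpSig σ) : Comp σ → Comp σ → Prop
  | iteTrue {c1 c2} : Step Ω (.ite .tt c1 c2) c1
  | iteFalse {c1 c2} : Step Ω (.ite .ff c1 c2) c2
  | caseZero {c1 c2} : Step Ω (.case .zero c1 c2) c1
  | caseSucc {e c1 c2} : Step Ω (.case (.succ e) c1 c2) (subst0C e c2)
  | app {A c e} : Step Ω (.app (.fn A c) e) (subst0C e c)
  | letCong {c1 c1' c2} : Step Ω c1 c1' → Step Ω (.letin c1 c2) (.letin c1' c2)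
  | letVal {e c2} : Step Ω (.letin (.ret e) c2) (subst0C e c2)
  | letOp {ι op e c1 c2} :
      Step Ω (.letin (.call (.inst ι) op e c1) c2)
        (.call (.inst ι) op e (.letin c1 (renameC (liftRen Nat.succ) c2)))
  | letrec {A C c1 c2} : Step Ω (.letrec A C c1 c2) (subst0C (recUnfold A C c1) c2)
  | handleCong {h c c'} : Step Ω c c' → Step Ω (.handle h c) (.handle h c')
  | handleVal {A cv ocs e} :
      Step Ω (.handle (.handler A cv ocs) (.ret e)) (subst0C e cv)
  | handleOp {A cv ocs ι op e c c'} :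
      Dispatch ocs ι op e
        (.fn (Ω.res op) (.handle (shiftE (.handler A cv ocs)) c)) c' →
      Step Ω (.handle (.handler A cv ocs) (.call (.inst ι) op e c)) c'

/-- Big-step operational semantics `c ⇓ r` of core Eff; results are `val e`
and operation calls `ι#op e (y.c)`. -/
inductive Big (Ω : OpSig σ) : Comp σ → Comp σ → Prop
  | ret {e} : Big Ω (.ret e) (.ret e)
  | call {ι op e c} : Big Ω (.call (.inst ι) op e c) (.call (.inst ι) op e c)
  | iteTrue {c1 c2 r} : Big Ω c1 r → Big Ω (.ite .tt c1 c2) r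
  | iteFalse {c1 c2 r} : Big Ω c2 r → Big Ω (.ite .ff c1 c2) r
  | caseZero {c1 c2 r} : Big Ω c1 r → Big Ω (.case .zero c1 c2) r
  | caseSucc {e c1 c2 r} : Big Ω (subst0C e c2) r → Big Ω (.case (.succ e) c1 c2) r
  | app {A c e r} : Big Ω (subst0C e c) r → Big Ω (.app (.fn A c) e) r
  | letVal {c1 c2 e r} : Big Ω c1 (.ret e) → Big Ω (subst0C e c2) r →
      Big Ω (.letin c1 c2) r
  | letOp {c1 c2 ι op e c} : Big Ω c1 (.call (.inst ι) op e c) →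
      Big Ω (.letin c1 c2)
        (.call (.inst ι) op e (.letin c (renameC (liftRen Nat.succ) c2)))
  | letrec {A C c1 c2 r} : Big Ω (subst0C (recUnfold A C c1) c2) r →
      Big Ω (.letrec A C c1 c2) r
  | handleVal {A cv ocs c e r} : Big Ω c (.ret e) → Big Ω (subst0C e cv) r →
      Big Ω (.handle (.handler A cv ocs) c) r
  | handleOp {A cv ocs c ι op e c' c'' r} :
      Big Ω c (.call (.inst ι) op e c') →
      Dispatch ocs ι op e
        (.fn (Ω.res op) (.handle (shiftE (.handler A cv ocs)) c')) c'' →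
      Big Ω c'' r →
      Big Ω (.handle (.handler A cv ocs) c) r

/-- `c ⇝* r`: iterated small steps ending in a result. -/
inductive StarStep (Ω : OpSig σ) : Comp σ → Comp σ → Prop
  | ret {e} : StarStep Ω (.ret e) (.ret e)
  | call {ι op e c} : StarStep Ω (.call (.inst ι) op e c) (.call (.inst ι) op e c)
  | step {c c' r} : Step Ω c c' → StarStep Ω c' r → StarStep Ω c r

/- Structural subtyping of pure and dirty types. -/
mutual
inductive SubP (σ : Sig) : PType σ → PType σ → Prop
  | bool : SubP σ .bool .bool
  | nat : SubP σ .nat .nat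
  | unit : SubP σ .unit .unit
  | empty : SubP σ .empty .empty
  | fn {A A' C C'} : SubP σ A' A → SubD σ C C' → SubP σ (.fn A C) (.fn A' C')
  | eff {E R R'} : R ⊆ R' → SubP σ (.eff E R) (.eff E R')
  | hand {C C' D D'} : SubD σ C' C → SubD σ D D' → SubP σ (.hand C D) (.hand C' D')
inductive SubD (σ : Sig) : DType σ → DType σ → Prop
  | bang {A A' Δ Δ'} : SubP σ A A' → Δ ⊆ Δ' → SubD σ (.bang A Δ) (.bang A' Δ')
end

/- The effect system of core Eff: typing of expressions, operation cases
(`Γ ⊢ ocs : C / Δ`) and computations, with subsumption. -/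
mutual
inductive HasTypeE (σ : Sig) (Ω : OpSig σ) [DecidableEq σ.Inst] [DecidableEq σ.Op] :
    List (PType σ) → Expr σ → PType σ → Prop
  | var {Γ n A} : Γ[n]? = some A → HasTypeE σ Ω Γ (.var n) A
  | tt {Γ} : HasTypeE σ Ω Γ .tt .bool
  | ff {Γ} : HasTypeE σ Ω Γ .ff .bool
  | zero {Γ} : HasTypeE σ Ω Γ .zero .nat
  | succ {Γ e} : HasTypeE σ Ω Γ e .nat → HasTypeE σ Ω Γ (.succ e) .nat
  | unit {Γ} : HasTypeE σ Ω Γ .unit .unit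
  | fn {Γ A c C} : HasTypeC σ Ω (A :: Γ) c C → HasTypeE σ Ω Γ (.fn A c) (.fn A C)
  | inst {Γ ι E R} : ι ∈ R → (∀ κ ∈ R, Ω.instOf κ = E) →
      HasTypeE σ Ω Γ (.inst ι) (.eff E R)
  | handler {Γ A cv ocs B Δ Δ' Δ''} :
      HasTypeC σ Ω (A :: Γ) cv (.bang B Δ') →
      HasTypeO σ Ω Γ ocs (.bang B Δ') Δ'' →
      Δ ⊆ Δ'' ∪ Δ' →
      HasTypeE σ Ω Γ (.handler A cv ocs) (.hand (.bang A Δ) (.bang B Δ'))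
  | sub {Γ e A A'} : HasTypeE σ Ω Γ e A → SubP σ A A' → HasTypeE σ Ω Γ e A'
inductive HasTypeO (σ : Sig) (Ω : OpSig σ) [DecidableEq σ.Inst] [DecidableEq σ.Op] :
    List (PType σ) → OpCases σ → DType σ → Finset (σ.Inst × σ.Op) → Prop
  | nil {Γ C} : HasTypeO σ Ω Γ (.nil C) C ∅
  | cons {Γ e op c ocs E R C Δ Δ'} :
      HasTypeE σ Ω Γ e (.eff E R) →
      Ω.opOf op = E →
      HasTypeC σ Ω (.fn (Ω.res op) C :: Ω.par op :: Γ) c C →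
      HasTypeO σ Ω Γ ocs C Δ' →
      (∀ ι, R = {ι} → Δ ⊆ insert (ι, op) Δ') →
      ((¬ ∃ ι, R = {ι}) → Δ ⊆ Δ') →
      HasTypeO σ Ω Γ (.cons e op c ocs) C Δ
inductive HasTypeC (σ : Sig) (Ω : OpSig σ) [DecidableEq σ.Inst] [DecidableEq σ.Op] :
    List (PType σ) → Comp σ → DType σ → Prop
  | ret {Γ e A Δ} : HasTypeE σ Ω Γ e A → HasTypeC σ Ω Γ (.ret e) (.bang A Δ)
  | call {Γ e1 op e2 c E R A Δ} :
      HasTypeE σ Ω Γ e1 (.eff E R) →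
      Ω.opOf op = E →
      HasTypeE σ Ω Γ e2 (Ω.par op) →
      HasTypeC σ Ω (Ω.res op :: Γ) c (.bang A Δ) →
      (∀ ι ∈ R, (ι, op) ∈ Δ) →
      HasTypeC σ Ω Γ (.call e1 op e2 c) (.bang A Δ)
  | handle {Γ e c C D} : HasTypeE σ Ω Γ e (.hand C D) → HasTypeC σ Ω Γ c C →
      HasTypeC σ Ω Γ (.handle e c) D
  | ite {Γ e c1 c2 C} : HasTypeE σ Ω Γ e .bool → HasTypeC σ Ω Γ c1 C →
      HasTypeC σ Ω Γ c2 C → HasTypeC σ Ω Γ (.ite e c1 c2) C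
  | case {Γ e c1 c2 C} : HasTypeE σ Ω Γ e .nat → HasTypeC σ Ω Γ c1 C →
      HasTypeC σ Ω (.nat :: Γ) c2 C → HasTypeC σ Ω Γ (.case e c1 c2) C
  | absurd {Γ e C} : HasTypeE σ Ω Γ e .empty → HasTypeC σ Ω Γ (.absurd C e) C
  | app {Γ e1 e2 A C} : HasTypeE σ Ω Γ e1 (.fn A C) → HasTypeE σ Ω Γ e2 A →
      HasTypeC σ Ω Γ (.app e1 e2) C
  | letin {Γ c1 c2 A B Δ} : HasTypeC σ Ω Γ c1 (.bang A Δ) →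
      HasTypeC σ Ω (A :: Γ) c2 (.bang B Δ) →
      HasTypeC σ Ω Γ (.letin c1 c2) (.bang B Δ)
  | letrec {Γ A C c1 c2 D} :
      HasTypeC σ Ω (A :: .fn A C :: Γ) c1 C →
      HasTypeC σ Ω (.fn A C :: Γ) c2 D →
      HasTypeC σ Ω Γ (.letrec A C c1 c2) D
  | sub {Γ c C C'} : HasTypeC σ Ω Γ c C → SubD σ C C' → HasTypeC σ Ω Γ c C'
end

/-- Skeletal types: pure/dirty types with all effect information erased. -/
inductive SType (σ : Sig) : Type
  | bool : SType σ
  | nat : SType σ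
  | unit : SType σ
  | empty : SType σ
  | fn : SType σ → SType σ → SType σ
  | eff : σ.Effect → SType σ
  | hand : SType σ → SType σ → SType σ

/- Skeletal erasure of pure and dirty types. -/
mutual
def skelP : PType σ → SType σ
  | .bool => .bool
  | .nat => .nat
  | .unit => .unit
  | .empty => .empty
  | .fn A C => .fn (skelP A) (skelD C)
  | .eff E _ => .eff E
  | .hand C D => .hand (skelD C) (skelD D)
def skelD : DType σ → SType σ
  | .bang A _ => skelP A
end

/- The skeletal type system: the rules of core Eff with all effect
information erased and without subsumption. -/
mutual
inductive SHasTypeE (σ : Sig) (Ω : OpSig σ) :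
    List (SType σ) → Expr σ → SType σ → Prop
  | var {Γ n S} : Γ[n]? = some S → SHasTypeE σ Ω Γ (.var n) S
  | tt {Γ} : SHasTypeE σ Ω Γ .tt .bool
  | ff {Γ} : SHasTypeE σ Ω Γ .ff .bool
  | zero {Γ} : SHasTypeE σ Ω Γ .zero .nat
  | succ {Γ e} : SHasTypeE σ Ω Γ e .nat → SHasTypeE σ Ω Γ (.succ e) .nat
  | unit {Γ} : SHasTypeE σ Ω Γ .unit .unit
  | fn {Γ A c T} : SHasTypeC σ Ω (skelP A :: Γ) c T →
      SHasTypeE σ Ω Γ (.fn A c) (.fn (skelP A) T)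
  | inst {Γ ι} : SHasTypeE σ Ω Γ (.inst ι) (.eff (Ω.instOf ι))
  | handler {Γ A cv ocs T} :
      SHasTypeC σ Ω (skelP A :: Γ) cv T →
      SHasTypeO σ Ω Γ ocs T →
      SHasTypeE σ Ω Γ (.handler A cv ocs) (.hand (skelP A) T)
inductive SHasTypeO (σ : Sig) (Ω : OpSig σ) :
    List (SType σ) → OpCases σ → SType σ → Prop
  | nil {Γ C} : SHasTypeO σ Ω Γ (.nil C) (skelD C)
  | cons {Γ e op c ocs T} :
      SHasTypeE σ Ω Γ e (.eff (Ω.opOf op)) →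
      SHasTypeC σ Ω (.fn (skelP (Ω.res op)) T :: skelP (Ω.par op) :: Γ) c T →
      SHasTypeO σ Ω Γ ocs T →
      SHasTypeO σ Ω Γ (.cons e op c ocs) T
inductive SHasTypeC (σ : Sig) (Ω : OpSig σ) :
    List (SType σ) → Comp σ → SType σ → Prop
  | ret {Γ e S} : SHasTypeE σ Ω Γ e S → SHasTypeC σ Ω Γ (.ret e) S
  | call {Γ e1 op e2 c T} :
      SHasTypeE σ Ω Γ e1 (.eff (Ω.opOf op)) →
      SHasTypeE σ Ω Γ e2 (skelP (Ω.par op)) →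
      SHasTypeC σ Ω (skelP (Ω.res op) :: Γ) c T →
      SHasTypeC σ Ω Γ (.call e1 op e2 c) T
  | handle {Γ e c S T} : SHasTypeE σ Ω Γ e (.hand S T) → SHasTypeC σ Ω Γ c S →
      SHasTypeC σ Ω Γ (.handle e c) T
  | ite {Γ e c1 c2 T} : SHasTypeE σ Ω Γ e .bool → SHasTypeC σ Ω Γ c1 T →
      SHasTypeC σ Ω Γ c2 T → SHasTypeC σ Ω Γ (.ite e c1 c2) T
  | case {Γ e c1 c2 T} : SHasTypeE σ Ω Γ e .nat → SHasTypeC σ Ω Γ c1 T →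
      SHasTypeC σ Ω (.nat :: Γ) c2 T → SHasTypeC σ Ω Γ (.case e c1 c2) T
  | absurd {Γ e C} : SHasTypeE σ Ω Γ e .empty → SHasTypeC σ Ω Γ (.absurd C e) (skelD C)
  | app {Γ e1 e2 S T} : SHasTypeE σ Ω Γ e1 (.fn S T) → SHasTypeE σ Ω Γ e2 S →
      SHasTypeC σ Ω Γ (.app e1 e2) T
  | letin {Γ c1 c2 S T} : SHasTypeC σ Ω Γ c1 S → SHasTypeC σ Ω (S :: Γ) c2 T →
      SHasTypeC σ Ω Γ (.letin c1 c2) T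
  | letrec {Γ A C c1 c2 T} :
      SHasTypeC σ Ω (skelP A :: .fn (skelP A) (skelD C) :: Γ) c1 (skelD C) →
      SHasTypeC σ Ω (.fn (skelP A) (skelD C) :: Γ) c2 T →
      SHasTypeC σ Ω Γ (.letrec A C c1 c2) T
end

end CoreEff

namespace CoreEff

/-! Erasing effect information turns every derivation of the effect system into a skeletal
derivation: subsumption disappears because subtyping only relates types with equal skeletons.
The skeletal system is syntax-directed, so skeletal types are unique. -/

section

variable {σ : Sig} {Ω : OpSig σ}

mutual
theorem SubP.skelP_eq {A B : PType σ} : SubP σ A B → skelP A = skelP B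
  | .bool | .nat | .unit | .empty | .eff _ => rfl
  | .fn hA hC => by rw [skelP, skelP, hA.skelP_eq, hC.skelD_eq]
  | .hand hC hD => by rw [skelP, skelP, hC.skelD_eq, hD.skelD_eq]
theorem SubD.skelD_eq {C D : DType σ} : SubD σ C D → skelD C = skelD D
  | .bang hA _ => hA.skelP_eq
end

mutual
theorem SHasTypeE.unique {Γ e} {S S' : SType σ} :
    SHasTypeE σ Ω Γ e S → SHasTypeE σ Ω Γ e S' → S = S'
  | .var h, .var h' => Option.some_injective _ (h.symm.trans h')
  | .tt, .tt | .ff, .ff | .zero, .zero | .succ _, .succ _ | .unit, .unit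
  | .inst, .inst => rfl
  | .fn hc, .fn hc' => by rw [hc.unique hc']
  | .handler hcv _, .handler hcv' _ => by rw [hcv.unique hcv']
theorem SHasTypeC.unique {Γ c} {T T' : SType σ} :
    SHasTypeC σ Ω Γ c T → SHasTypeC σ Ω Γ c T' → T = T'
  | .ret he, .ret he' => he.unique he'
  | .call _ _ hc, .call _ _ hc' => hc.unique hc'
  | .handle he _, .handle he' _ => (SType.hand.inj (he.unique he')).2
  | .ite _ hc _, .ite _ hc' _ => hc.unique hc'
  | .case _ hc _, .case _ hc' _ => hc.unique hc'
  | .absurd _, .absurd _ => rfl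
  | .app he _, .app he' _ => (SType.fn.inj (he.unique he')).2
  | .letin hc1 hc2, .letin hc1' hc2' => by
      cases hc1.unique hc1'
      exact hc2.unique hc2'
  | .letrec _ hc, .letrec _ hc' => hc.unique hc'
end

variable [DecidableEq σ.Inst] [DecidableEq σ.Op]

mutual
theorem HasTypeE.erase {Γ e A} :
    HasTypeE σ Ω Γ e A → SHasTypeE σ Ω (Γ.map skelP) e (skelP A)
  | .var h => .var (by rw [List.getElem?_map, h]; rfl)
  | .tt => .tt
  | .ff => .ff
  | .zero => .zero
  | .succ he => .succ he.erase
  | .unit => .unit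
  | .fn hc => .fn hc.erase
  | .inst hι hR => by rw [skelP, ← hR _ hι]; exact .inst
  | .handler hcv hocs _ => .handler hcv.erase hocs.erase
  | .sub he hA => hA.skelP_eq ▸ he.erase
theorem HasTypeO.erase {Γ ocs C Δ} :
    HasTypeO σ Ω Γ ocs C Δ → SHasTypeO σ Ω (Γ.map skelP) ocs (skelD C)
  | .nil => .nil
  | .cons he hop hc hocs _ _ => .cons (hop ▸ he.erase) hc.erase hocs.erase
theorem HasTypeC.erase {Γ c C} :
    HasTypeC σ Ω Γ c C → SHasTypeC σ Ω (Γ.map skelP) c (skelD C)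
  | .ret he => .ret he.erase
  | .call he1 hop he2 hc _ => .call (hop ▸ he1.erase) he2.erase hc.erase
  | .handle he hc => .handle he.erase hc.erase
  | .ite he hc1 hc2 => .ite he.erase hc1.erase hc2.erase
  | .case he hc1 hc2 => .case he.erase hc1.erase hc2.erase
  | .absurd he => .absurd he.erase
  | .app he1 he2 => .app he1.erase he2.erase
  | .letin hc1 hc2 => .letin hc1.erase hc2.erase
  | .letrec hc1 hc2 => .letrec hc1.erase hc2.erase
  | .sub hc hC => hC.skelD_eq ▸ hc.erase
end

end

/-- If a closed computation `c` has dirty types `C` and `D`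
then `C^s = D^s`; analogously, if a closed expression `e` has pure types `A`
and `B`, then `A^s = B^s`. -/
theorem types_same_skeleton {σ : Sig} (Ω : OpSig σ) [DecidableEq σ.Inst] [DecidableEq σ.Op] :
    (∀ (c : Comp σ) (C D : DType σ),
        HasTypeC σ Ω [] c C → HasTypeC σ Ω [] c D → skelD C = skelD D) ∧
    (∀ (e : Expr σ) (A B : PType σ),
        HasTypeE σ Ω [] e A → HasTypeE σ Ω [] e B → skelP A = skelP B) := by
  exact ⟨fun _ _ _ h₁ h₂ => h₁.erase.unique h₂.erase,
    fun _ _ _ h₁ h₂ => h₁.erase.unique h₂.erase⟩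

end CoreEff
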